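/- arXiv:1109.0787 — 2 statements merged into one kernel-verified Lean document; each statement's English description precedes it below -/
import Mathlib

section
/- Let G=(V,E) be a graph with a finite multiset R of vertices and let M be a matroid on R of rank k with rank function r_M, satisfying (C1): R_v is independent in M for each v∈V. Then for any F_1,F_2⊆E with V(F_1)∩V(F_2)≠∅, one has f_{M,k}(F_1)+f_{M,k}(F_2) ≥ f_{M,k}(F_1∪F_2). -/
open Finset
open scoped Classical

/-- Vertex set `V(F)` of an edge subset `F`: vertices incident to an edge of `F`. -/
noncomputable def incVerts {V E : Type*} [Fintype V] (ends : E → Sym2 V) (F : Finset E) :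
    Finset V :=
  Finset.univ.filter (fun v => ∃ e ∈ F, v ∈ ends e)

/-- The multiset `R_v` of roots located at a vertex `v` (as a set of root indices). -/
noncomputable def rootsAt {V ι : Type*} [Fintype ι] (root : ι → V) (v : V) : Finset ι :=
  Finset.univ.filter (fun i => root i = v)

/-- The multiset `R_F` of roots located at vertices of `V(F)`. -/
noncomputable def rootsOf {V E ι : Type*} [Fintype V] [Fintype ι] (ends : E → Sym2 V)
    (root : ι → V) (F : Finset E) : Finset ι :=
  Finset.univ.filter (fun i => root i ∈ incVerts ends F)

/-- The multiset `R_X` of roots located at vertices of `X ⊆ V`. -/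
noncomputable def rootsIn {V ι : Type*} [Fintype ι] (root : ι → V) (X : Finset V) : Finset ι :=
  Finset.univ.filter (fun i => root i ∈ X)

/-- A matroid on a finite ground type `ι`, given by its rank function. -/
structure FinMatroid (ι : Type*) [Fintype ι] where
  rk : Finset ι → ℕ
  rk_le_card : ∀ X : Finset ι, rk X ≤ X.card
  rk_mono : ∀ ⦃X Y : Finset ι⦄, X ⊆ Y → rk X ≤ rk Y
  rk_submodular : ∀ X Y : Finset ι, rk (X ∪ Y) + rk (X ∩ Y) ≤ rk X + rk Y

/-- Independence in a matroid given by a rank function. -/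
def FinMatroid.Indep {ι : Type*} [Fintype ι] (M : FinMatroid ι) (X : Finset ι) : Prop :=
  M.rk X = X.card

/-- `X` is a base of the matroid with rank function `ρ`: independent and spanning. -/
def IsBaseOf {ι : Type*} [Fintype ι] (ρ : Finset ι → ℕ) (X : Finset ι) : Prop :=
  ρ X = X.card ∧ ρ X = ρ Finset.univ

/-- The closure (span) `sp(X)` of `X` in the matroid with rank function `ρ`. -/
noncomputable def spOf {ι : Type*} [Fintype ι] (ρ : Finset ι → ℕ) (X : Finset ι) : Finset ι :=
  Finset.univ.filter (fun y => ρ (insert y X) = ρ X)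

/-- Two vertices are adjacent via an edge of `F`. -/
def adjIn {V E : Type*} (ends : E → Sym2 V) (F : Finset E) (u v : V) : Prop :=
  ∃ e ∈ F, ends e = s(u, v)

/-- The edge set `F` is connected: all its incident vertices are mutually reachable in `F`. -/
def connIn {V E : Type*} [Fintype V] (ends : E → Sym2 V) (F : Finset E) : Prop :=
  ∀ u ∈ incVerts ends F, ∀ v ∈ incVerts ends F, Relation.ReflTransGen (adjIn ends F) u v

/-- `(T, r)` is a rooted tree: `T` is empty, or `T` is connected and acyclic with `r ∈ V(T)`.
(A connected edge set `T` is acyclic iff `|T| + 1 = |V(T)|`.) -/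
def IsRootedTree {V E : Type*} [Fintype V] (ends : E → Sym2 V) (T : Finset E) (r : V) : Prop :=
  T = ∅ ∨ (connIn ends T ∧ T.card + 1 = (incVerts ends T).card ∧ r ∈ incVerts ends T)

/-- The vertex set `V(T, r) = V(T) ∪ {r}` spanned by the rooted tree `(T, r)`. -/
noncomputable def treeVerts {V E : Type*} [Fintype V] (ends : E → Sym2 V) (T : Finset E)
    (r : V) : Finset V :=
  insert r (incVerts ends T)

/-- `T` is a spanning tree on the vertex set `X`. -/
def IsSpanningTreeOn {V E : Type*} [Fintype V] (ends : E → Sym2 V) (X : Finset V)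
    (T : Finset E) : Prop :=
  incVerts ends T ⊆ X ∧ (∀ u ∈ X, ∀ v ∈ X, Relation.ReflTransGen (adjIn ends T) u v) ∧
    T.card + 1 = X.card

/-- The family `T` is a basic rooted-tree decomposition of the subgraph with vertex set `Vs`,
edge set `Es` and roots indexed by `Rs`, with respect to the matroid (on `Rs`) whose rank
function is `ρ`: the `T i` are edge-disjoint rooted trees partitioning `Es`, and every vertex
of `Vs` is spanned by a family of rooted trees whose root multiset is a base. -/
def IsBasicDecompFam {V E ι : Type*} [Fintype V] [Fintype ι] (ends : E → Sym2 V) (root : ι → V)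
    (ρ : Finset ι → ℕ) (Vs : Finset V) (Rs : Finset ι) (Es : Finset E)
    (T : ι → Finset E) : Prop :=
  (∀ i ∈ Rs, T i ⊆ Es ∧ IsRootedTree ends (T i) (root i)) ∧
  (∀ i ∉ Rs, T i = ∅) ∧
  (∀ i j, i ≠ j → Disjoint (T i) (T j)) ∧
  (∀ e ∈ Es, ∃ i ∈ Rs, e ∈ T i) ∧
  (∀ v ∈ Vs, IsBaseOf ρ (Rs.filter (fun i => v ∈ treeVerts ends (T i) (root i))))

/-- `(G, R)` admits a basic rooted-tree decomposition. -/
def HasBasicDecomp {V E ι : Type*} [Fintype V] [Fintype ι] (ends : E → Sym2 V) (root : ι → V)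
    (ρ : Finset ι → ℕ) (Vs : Finset V) (Rs : Finset ι) (Es : Finset E) : Prop :=
  ∃ T : ι → Finset E, IsBasicDecompFam ends root ρ Vs Rs Es T

/-- Condition (C1): the root multiset at each vertex is independent. -/
def CondC1 {V ι : Type*} [Fintype ι] (root : ι → V) (ρ : Finset ι → ℕ) : Prop :=
  ∀ v : V, ρ (rootsAt root v) = (rootsAt root v).card

/-- Condition (C2): `|F| + |R_F| ≤ k|V(F)| - k + ρ(R_F)` for every nonempty `F ⊆ E`. -/
def CondC2 {V E ι : Type*} [Fintype V] [Fintype E] [Fintype ι] (ends : E → Sym2 V)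
    (root : ι → V) (ρ : Finset ι → ℕ) (k : ℕ) : Prop :=
  ∀ F : Finset E, F.Nonempty →
    F.card + (rootsOf ends root F).card + k ≤
      k * (incVerts ends F).card + ρ (rootsOf ends root F)

/-- Condition (C3): `|E| + |R| = k|V|`. -/
def CondC3 (V E ι : Type*) [Fintype V] [Fintype E] [Fintype ι] (k : ℕ) : Prop :=
  Fintype.card E + Fintype.card ι = k * Fintype.card V

/-- The function `f_{M,c}(F) = c(|V(F)| - 1) - (|R_F| - r_M(R_F))`, as an integer. -/
noncomputable def fcount {V E ι : Type*} [Fintype V] [Fintype E] [Fintype ι] (ends : E → Sym2 V)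
    (root : ι → V) (ρ : Finset ι → ℕ) (c : ℤ) (F : Finset E) : ℤ :=
  c * ((incVerts ends F).card - 1) -
    (((rootsOf ends root F).card : ℤ) - (ρ (rootsOf ends root F) : ℤ))

/-! `f_{M,k}(F)` depends only on `X = V(F)`, through `g(X) = k(|X| - 1) - |R_X| + r_M(R_X)`.
Since `R_{X ∪ Y} = R_X ∪ R_Y` and `R_{X ∩ Y} = R_X ∩ R_Y`, `g` is submodular: it is modular in
`|X|` and `|R_X|` and submodular in `r_M(R_X)`. By (C1), `g(X) ≥ 0` for nonempty `X`: the roots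
at one vertex `v ∈ X` are independent in `R_X`, and those at each of the other `|X| - 1` vertices
number at most `k`. Applying this to `X = V(F₁) ∩ V(F₂)` gives the claim. -/

noncomputable def vcount {V ι : Type*} [Fintype ι] (root : ι → V) (ρ : Finset ι → ℕ) (c : ℤ)
    (X : Finset V) : ℤ :=
  c * (X.card - 1) - (((rootsIn root X).card : ℤ) - (ρ (rootsIn root X) : ℤ))

section Roots

variable {V ι : Type*} [Fintype ι] (root : ι → V)

theorem rootsIn_union (X Y : Finset V) :
    rootsIn root (X ∪ Y) = rootsIn root X ∪ rootsIn root Y := by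
  simp only [rootsIn, mem_union, filter_or]

theorem rootsIn_inter (X Y : Finset V) :
    rootsIn root (X ∩ Y) = rootsIn root X ∩ rootsIn root Y := by
  simp only [rootsIn, mem_inter, filter_and]

theorem rootsAt_subset_rootsIn {X : Finset V} {v : V} (hv : v ∈ X) :
    rootsAt root v ⊆ rootsIn root X := by
  intro i hi
  simp only [rootsAt, rootsIn, mem_filter] at hi ⊢
  exact ⟨hi.1, hi.2 ▸ hv⟩

theorem card_rootsIn (X : Finset V) :
    (rootsIn root X).card = ∑ v ∈ X, (rootsAt root v).card := by
  rw [card_eq_sum_card_fiberwise (s := rootsIn root X) (f := root) (t := X)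
    fun i hi => (mem_filter.mp hi).2]
  refine sum_congr rfl fun v hv => congrArg card ?_
  ext i
  simp only [rootsIn, rootsAt, mem_filter, mem_univ, true_and, and_iff_right_iff_imp]
  exact fun h => h ▸ hv

end Roots

theorem incVerts_union {V E : Type*} [Fintype V] (ends : E → Sym2 V) (F₁ F₂ : Finset E) :
    incVerts ends (F₁ ∪ F₂) = incVerts ends F₁ ∪ incVerts ends F₂ := by
  ext v
  simp only [incVerts, mem_filter, mem_union, mem_univ, true_and, or_and_right, exists_or]

theorem fcount_eq_vcount {V E ι : Type*} [Fintype V] [Fintype E] [Fintype ι]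
    (ends : E → Sym2 V) (root : ι → V) (ρ : Finset ι → ℕ) (c : ℤ) (F : Finset E) :
    fcount ends root ρ c F = vcount root ρ c (incVerts ends F) :=
  rfl

section VCount

variable {V ι : Type*} [Fintype ι] (root : ι → V) (M : FinMatroid ι)

theorem vcount_union_add_vcount_inter_le (c : ℤ) (X Y : Finset V) :
    vcount root M.rk c (X ∪ Y) + vcount root M.rk c (X ∩ Y) ≤
      vcount root M.rk c X + vcount root M.rk c Y := by
  have hV : ((X ∪ Y).card : ℤ) + (X ∩ Y).card = X.card + Y.card := by
    exact_mod_cast card_union_add_card_inter X Y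
  have hR : ((rootsIn root X ∪ rootsIn root Y).card : ℤ) +
      (rootsIn root X ∩ rootsIn root Y).card =
        (rootsIn root X).card + (rootsIn root Y).card := by
    exact_mod_cast card_union_add_card_inter _ _
  have hrk : (M.rk (rootsIn root X ∪ rootsIn root Y) : ℤ) +
      M.rk (rootsIn root X ∩ rootsIn root Y) ≤ M.rk (rootsIn root X) + M.rk (rootsIn root Y) := by
    exact_mod_cast M.rk_submodular _ _
  simp only [vcount, rootsIn_union, rootsIn_inter]
  linear_combination c * hV - hR + hrk

theorem card_rootsAt_le {k : ℕ} (hk : M.rk univ ≤ k) (hC1 : CondC1 root M.rk) (v : V) :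
    (rootsAt root v).card ≤ k :=
  hC1 v ▸ (M.rk_mono (subset_univ _)).trans hk

theorem vcount_nonneg {k : ℕ} (hk : M.rk univ ≤ k) (hC1 : CondC1 root M.rk) {X : Finset V}
    (hX : X.Nonempty) : 0 ≤ vcount root M.rk k X := by
  obtain ⟨v, hv⟩ := hX
  have hsplit : (rootsIn root X).card =
      (rootsAt root v).card + ∑ u ∈ X.erase v, (rootsAt root u).card := by
    rw [card_rootsIn, ← add_sum_erase _ _ hv]
  have hat : (rootsAt root v).card ≤ M.rk (rootsIn root X) :=
    hC1 v ▸ M.rk_mono (rootsAt_subset_rootsIn root hv)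
  have hrest : ∑ u ∈ X.erase v, (rootsAt root u).card ≤ (X.card - 1) * k := by
    simpa [card_erase_of_mem hv] using
      sum_le_sum fun u (_ : u ∈ X.erase v) => card_rootsAt_le root M hk hC1 u
  have hcard : 1 ≤ X.card := card_pos.mpr ⟨v, hv⟩
  have : (rootsIn root X).card ≤ M.rk (rootsIn root X) + (X.card - 1) * k := by omega
  zify [hcard] at this
  simp only [vcount]
  linarith

end VCount

/-- **Lemma (intersecting submodularity of `f_{M,k}`).**
Let `G = (V, E)` be a graph with a finite multiset `R` of vertices and `M` a matroid on `R`
of rank `k`, satisfying (C1).  Then for any `F₁, F₂ ⊆ E` with `V(F₁) ∩ V(F₂) ≠ ∅`,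
`f_{M,k}(F₁) + f_{M,k}(F₂) ≥ f_{M,k}(F₁ ∪ F₂)`. -/
theorem fcount_intersecting_submodular {V E ι : Type*} [Fintype V] [Fintype E] [Fintype ι]
    (ends : E → Sym2 V) (root : ι → V) (M : FinMatroid ι) (k : ℕ)
    (hk : M.rk Finset.univ = k)
    (hC1 : CondC1 root M.rk)
    (F₁ F₂ : Finset E) (hmeet : (incVerts ends F₁ ∩ incVerts ends F₂).Nonempty) :
    fcount ends root M.rk (k : ℤ) (F₁ ∪ F₂) ≤
      fcount ends root M.rk (k : ℤ) F₁ + fcount ends root M.rk (k : ℤ) F₂ := by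
  simp only [fcount_eq_vcount, incVerts_union]
  have hsub := vcount_union_add_vcount_inter_le root M k (incVerts ends F₁) (incVerts ends F₂)
  have hnonneg := vcount_nonneg root M hk.le hC1 hmeet
  linarith
end

section
/- In the setting of the auxiliary bipartite graph H_0: let 0≤ℓ≤k be an integer, let e∈E, and let H_e=(V_e^+,V_e^−;A_e) be obtained from H_0 by adding ℓ new elements e_1,…,e_ℓ (copies of e) to V_0^+, each joined to v^i for every copy v^i of a vertex v incident to e. Define g_{k,ℓ}(F)=k|V(F)|−ℓ+r_M(F∩L) for F⊆E∪L. Suppose |F| ≤ g_{k,0}(F) holds for every F⊆E∪L. Then |F| ≤ g_{k,ℓ}(F) holds for every F⊆E∪L with e∈F if and only if H_e has an independent matching covering V_e^+. -/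
open Finset
open scoped Classical

/-- Incidence of a vertex `v` with an element of `E ∪ L` in the graph `G*` obtained by
adding a self-loop at the vertex of each root. -/
def incStar {V E ι : Type*} (ends : E → Sym2 V) (root : ι → V) (v : V) : E ⊕ ι → Prop
  | Sum.inl e => v ∈ ends e
  | Sum.inr r => root r = v

/-- The vertex set `V(F)` of a subset `F ⊆ E ∪ L` in `G*`. -/
noncomputable def incVertsStar {V E ι : Type*} [Fintype V] (ends : E → Sym2 V)
    (root : ι → V) (F : Finset (E ⊕ ι)) : Finset V :=
  Finset.univ.filter (fun v => ∃ x ∈ F, incStar ends root v x)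

/-- The loop part `F ∩ L` of a subset `F ⊆ E ∪ L`. -/
noncomputable def loopPart {E ι : Type*} [Fintype ι] (F : Finset (E ⊕ ι)) : Finset ι :=
  Finset.univ.filter (fun r => Sum.inr r ∈ F)

/-- The adjacency of the auxiliary bipartite graph `H₀ = (V₀⁺, V₀⁻; A₀)`:
`V₀⁺ = E ∪ L`, `V₀⁻ = (V¹ ∪ ⋯ ∪ Vᵏ) ∪ L'`; each `e ∈ L` is joined to its copy `e' ∈ L'`,
and each `e ∈ E ∪ L` is joined to every copy `vⁱ` of every vertex `v` incident to `e`
in `G*`. -/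
def adjH0 {V E ι : Type*} (ends : E → Sym2 V) (root : ι → V) (k : ℕ) :
    E ⊕ ι → (Fin k × V) ⊕ ι → Prop
  | x, Sum.inl (_, v) => incStar ends root v x
  | Sum.inr r, Sum.inr r' => r' = r
  | Sum.inl _, Sum.inr _ => False

/-- The adjacency of the auxiliary bipartite graph `H_e`, obtained from `H₀` by adding
`ℓ` copies `e₁, …, e_ℓ` of the edge `e ∈ E` to `V₀⁺`, each joined to every copy `vⁱ` of
every vertex `v` incident to `e`. -/
def adjHe {V E ι : Type*} (ends : E → Sym2 V) (root : ι → V) (k ℓ : ℕ) (e : E) :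
    (E ⊕ ι) ⊕ Fin ℓ → (Fin k × V) ⊕ ι → Prop
  | Sum.inl x, y => adjH0 ends root k x y
  | Sum.inr _, Sum.inl (_, v) => v ∈ ends e
  | Sum.inr _, Sum.inr _ => False

/-!
Rado's theorem: if the right side of a bipartite graph carries a matroid, the left side can be
matched onto an independent set iff `|T| ≤ r(N(T))` for every left set `T`. In the induction,
either a neighbour `b` of a left vertex `a` can be contracted keeping the condition for the other
left vertices, or every neighbour of `a` is spanned by the neighbourhood of a tight set; tight
sets are closed under union, so the maximal one spans `N(a)`, against the condition for it
together with `a`.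

In `H_e` with the matroid `N⁻`, the neighbourhood of a left set `S` consists of all copies of
`V(F)` and of `F ∩ L`, where `F ⊆ E ∪ L` is `S` with its copies of `e` identified with `e`. So
`r(N(S)) = g_{k,0}(F)`, and Rado's condition for `H_e` is the counting condition for `g_{k,ℓ}` on
the sets containing `e` together with the one for `g_{k,0}`.
-/

namespace FinMatroid

variable {B : Type*} [Fintype B] (M : FinMatroid B)

theorem rk_empty : M.rk ∅ = 0 :=
  Nat.le_zero.mp (M.rk_le_card ∅)

theorem rk_union_le (X Y : Finset B) : M.rk (X ∪ Y) ≤ M.rk X + M.rk Y :=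
  (Nat.le_add_right _ _).trans (M.rk_submodular X Y)

theorem rk_insert_le (b : B) (X : Finset B) : M.rk (insert b X) ≤ M.rk X + M.rk {b} := by
  simpa [Finset.union_comm] using M.rk_union_le X {b}

theorem rk_singleton_le (b : B) : M.rk {b} ≤ 1 := by
  simpa using M.rk_le_card {b}

variable {M} in
theorem Indep.subset {X Y : Finset B} (hY : M.Indep Y) (hXY : X ⊆ Y) : M.Indep X := by
  have hsplit := M.rk_union_le X (Y \ X)
  rw [Finset.union_sdiff_of_subset hXY] at hsplit
  have := M.rk_le_card X
  have := M.rk_le_card (Y \ X)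
  have := Finset.card_sdiff_add_card_eq_card hXY
  unfold Indep at hY ⊢
  omega

theorem rk_insert_eq_of_subset {X Y : Finset B} {b : B} (hXY : X ⊆ Y)
    (hb : M.rk (insert b X) = M.rk X) : M.rk (insert b Y) = M.rk Y := by
  have hsub := M.rk_submodular Y (insert b X)
  rw [Finset.union_insert, Finset.union_eq_left.mpr hXY] at hsub
  have := M.rk_mono (Finset.subset_inter hXY (Finset.subset_insert b X))
  have := M.rk_mono (Finset.subset_insert b Y)
  omega

theorem rk_union_eq_of_forall_rk_insert_eq {X Y : Finset B}
    (hY : ∀ b ∈ Y, M.rk (insert b X) = M.rk X) : M.rk (X ∪ Y) = M.rk X := by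
  induction Y using Finset.induction_on with
  | empty => simp
  | insert b Y _ ih =>
    have hXY : M.rk (X ∪ Y) = M.rk X := ih fun c hc => hY c (Finset.mem_insert_of_mem hc)
    rw [Finset.union_insert, M.rk_insert_eq_of_subset Finset.subset_union_left
      (hY b (Finset.mem_insert_self b Y)), hXY]

noncomputable def contract (b : B) : FinMatroid B where
  rk X := M.rk (insert b X) - M.rk {b}
  rk_le_card X := by
    have := M.rk_insert_le b X
    have := M.rk_le_card X
    omega
  rk_mono X Y hXY := Nat.sub_le_sub_right (M.rk_mono (Finset.insert_subset_insert b hXY)) _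
  rk_submodular X Y := by
    have hsub := M.rk_submodular (insert b X) (insert b Y)
    rw [← Finset.insert_union_distrib, ← Finset.insert_inter_distrib] at hsub
    have := M.rk_mono (Finset.singleton_subset_iff.mpr (Finset.mem_insert_self b (X ∩ Y)))
    have := M.rk_mono (Finset.singleton_subset_iff.mpr (Finset.mem_insert_self b (X ∪ Y)))
    omega

theorem contract_rk (b : B) (X : Finset B) :
    (M.contract b).rk X = M.rk (insert b X) - M.rk {b} := rfl

theorem indep_insert_of_indep_contract {b : B} {X : Finset B} (hb : M.rk {b} = 1)
    (hX : (M.contract b).Indep X) : b ∉ X ∧ M.Indep (insert b X) := by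
  have hbX : M.rk (insert b X) = X.card + 1 := by
    have := M.rk_mono (Finset.singleton_subset_iff.mpr (Finset.mem_insert_self b X))
    rw [Indep, contract_rk] at hX
    omega
  have hnot : b ∉ X := fun hmem => by
    have := M.rk_le_card X
    rw [Finset.insert_eq_of_mem hmem] at hbX
    omega
  exact ⟨hnot, by rw [Indep, hbX, Finset.card_insert_of_notMem hnot]⟩

/-- The direct sum of the free matroid on `α` with `N`; for `α = Fin k × V` it is `N⁻`. -/
noncomputable def freeSum (α : Type*) [Fintype α] {ι : Type*} [Fintype ι] (N : FinMatroid ι) :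
    FinMatroid (α ⊕ ι) where
  rk X := X.toLeft.card + N.rk X.toRight
  rk_le_card X := by
    have := N.rk_le_card X.toRight
    have := Finset.card_toLeft_add_card_toRight (u := X)
    omega
  rk_mono X Y hXY :=
    Nat.add_le_add (Finset.card_le_card (Finset.toLeft_subset_toLeft hXY))
      (N.rk_mono (Finset.toRight_subset_toRight hXY))
  rk_submodular X Y := by
    have hl := Finset.card_union_add_card_inter X.toLeft Y.toLeft
    have hr := N.rk_submodular X.toRight Y.toRight
    rw [← Finset.toLeft_union, ← Finset.toLeft_inter] at hl
    rw [← Finset.toRight_union, ← Finset.toRight_inter] at hr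
    have key : #(X ∪ Y).toLeft + N.rk (X ∪ Y).toRight + (#(X ∩ Y).toLeft + N.rk (X ∩ Y).toRight)
        ≤ #X.toLeft + N.rk X.toRight + (#Y.toLeft + N.rk Y.toRight) := by omega
    -- the field's `∪` and `∩` use the classical `DecidableEq` instance, `key` the one on `⊕`
    convert key

variable {α ι : Type*} [Fintype α] [Fintype ι] (N : FinMatroid ι)

theorem freeSum_rk_disjSum (s : Finset α) (t : Finset ι) :
    (N.freeSum α).rk (s.disjSum t) = s.card + N.rk t := by
  simp [freeSum]

theorem freeSum_indep_iff {X : Finset (α ⊕ ι)} : (N.freeSum α).Indep X ↔ N.Indep X.toRight := by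
  have := N.rk_le_card X.toRight
  have := Finset.card_toLeft_add_card_toRight (u := X)
  simp only [Indep, freeSum]
  omega

end FinMatroid

section Rado

variable {A B : Type*} [Fintype B] (adj : A → B → Prop)

noncomputable def nbhd (S : Finset A) : Finset B :=
  S.biUnion fun a => univ.filter (adj a)

theorem nbhd_mono {S T : Finset A} (h : S ⊆ T) : nbhd adj S ⊆ nbhd adj T :=
  Finset.biUnion_subset_biUnion_of_subset_left _ h

theorem nbhd_union (S T : Finset A) : nbhd adj (S ∪ T) = nbhd adj S ∪ nbhd adj T :=
  Finset.union_biUnion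

theorem nbhd_insert (a : A) (S : Finset A) :
    nbhd adj (insert a S) = univ.filter (adj a) ∪ nbhd adj S :=
  Finset.biUnion_insert

theorem image_subset_nbhd {μ : A → B} {S : Finset A} (hμ : ∀ a ∈ S, adj a (μ a)) :
    S.image μ ⊆ nbhd adj S := by
  intro b hb
  obtain ⟨a, ha, rfl⟩ := Finset.mem_image.mp hb
  exact Finset.mem_biUnion.mpr ⟨a, ha, by simpa using hμ a ha⟩

def RadoCond (M : FinMatroid B) (S : Finset A) : Prop :=
  ∀ T ⊆ S, #T ≤ M.rk (nbhd adj T)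

def IsTight (M : FinMatroid B) (T : Finset A) : Prop :=
  M.rk (nbhd adj T) = #T

variable {adj} {M : FinMatroid B} {S : Finset A}

theorem RadoCond.isTight_union (h : RadoCond adj M S) {T₁ T₂ : Finset A} (hT₁ : T₁ ⊆ S)
    (hT₂ : T₂ ⊆ S) (ht₁ : IsTight adj M T₁) (ht₂ : IsTight adj M T₂) :
    IsTight adj M (T₁ ∪ T₂) := by
  have hsub := M.rk_submodular (nbhd adj T₁) (nbhd adj T₂)
  rw [← nbhd_union] at hsub
  have hinter := M.rk_mono <| Finset.subset_inter
    (nbhd_mono adj (Finset.inter_subset_left (s₂ := T₂)))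
    (nbhd_mono adj (Finset.inter_subset_right (s₁ := T₁)))
  have := h (T₁ ∩ T₂) (Finset.inter_subset_left.trans hT₁)
  have := h (T₁ ∪ T₂) (Finset.union_subset hT₁ hT₂)
  have := Finset.card_union_add_card_inter T₁ T₂
  unfold IsTight at ht₁ ht₂ ⊢
  omega

theorem RadoCond.exists_maximal_isTight (h : RadoCond adj M S) :
    ∃ U ⊆ S, IsTight adj M U ∧ ∀ T ⊆ S, IsTight adj M T → T ⊆ U := by
  let tight := S.powerset.filter (IsTight adj M)
  have hsup : tight.sup id ⊆ S ∧ IsTight adj M (tight.sup id) := by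
    refine Finset.sup_induction (p := fun U => U ⊆ S ∧ IsTight adj M U) ?_ ?_ ?_
    · simp [IsTight, nbhd, M.rk_empty]
    · rintro U₁ ⟨hU₁, ht₁⟩ U₂ ⟨hU₂, ht₂⟩
      exact ⟨Finset.union_subset hU₁ hU₂, h.isTight_union hU₁ hU₂ ht₁ ht₂⟩
    · intro T hT
      simpa [tight] using hT
  refine ⟨_, hsup.1, hsup.2, fun T hTS hT => ?_⟩
  exact Finset.le_sup (f := id) (Finset.mem_filter.mpr ⟨Finset.mem_powerset.mpr hTS, hT⟩)

theorem RadoCond.exists_isTight_spanning_of_not_contract (h : RadoCond adj M S) {b : B}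
    (hb : ¬ RadoCond adj (M.contract b) S) :
    ∃ T ⊆ S, IsTight adj M T ∧ M.rk (insert b (nbhd adj T)) = M.rk (nbhd adj T) := by
  simp only [RadoCond, not_forall, not_le, FinMatroid.contract_rk] at hb
  obtain ⟨T, hTS, hlt⟩ := hb
  have := h T hTS
  have := M.rk_mono (Finset.subset_insert b (nbhd adj T))
  have := M.rk_singleton_le b
  exact ⟨T, hTS, by unfold IsTight; omega, by omega⟩

theorem RadoCond.exists_contract {a : A} (h : RadoCond adj M (insert a S)) (ha : a ∉ S) :
    ∃ b, adj a b ∧ M.rk {b} = 1 ∧ RadoCond adj (M.contract b) S := by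
  have hS : RadoCond adj M S := fun T hT => h T (hT.trans (Finset.subset_insert a S))
  obtain ⟨U, hUS, hU, hUmax⟩ := hS.exists_maximal_isTight
  by_contra! hcon
  have hspan : ∀ b ∈ univ.filter (adj a), M.rk (insert b (nbhd adj U)) = M.rk (nbhd adj U) := by
    intro b hb
    have hab : adj a b := (Finset.mem_filter.mp hb).2
    by_cases hb1 : M.rk {b} = 1
    · obtain ⟨T, hTS, hT, hbT⟩ := hS.exists_isTight_spanning_of_not_contract (hcon b hab hb1)
      exact M.rk_insert_eq_of_subset (nbhd_mono adj (hUmax T hTS hT)) hbT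
    · have := M.rk_insert_le b (nbhd adj U)
      have := M.rk_singleton_le b
      have := M.rk_mono (Finset.subset_insert b (nbhd adj U))
      omega
  have hrk := M.rk_union_eq_of_forall_rk_insert_eq hspan
  have hcard := h (insert a U) (Finset.insert_subset_insert a hUS)
  rw [Finset.card_insert_of_notMem fun haU => ha (hUS haU), nbhd_insert,
    Finset.union_comm] at hcard
  unfold IsTight at hU
  omega

theorem RadoCond.exists_indep_matching [Nonempty B] (h : RadoCond adj M S) :
    ∃ μ : A → B, Set.InjOn μ S ∧ (∀ a ∈ S, adj a (μ a)) ∧ M.Indep (S.image μ) := by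
  induction S using Finset.induction_on generalizing M with
  | empty =>
    exact ⟨fun _ => Classical.arbitrary B, by simp, by simp, by simp [FinMatroid.Indep, M.rk_empty]⟩
  | insert a S ha ih =>
    obtain ⟨b, hab, hb, hcon⟩ := h.exists_contract ha
    obtain ⟨μ, hinj, hadj, hind⟩ := ih hcon
    obtain ⟨hbS, hindb⟩ := M.indep_insert_of_indep_contract hb hind
    have heq : Set.EqOn (Function.update μ a b) μ S := fun x hx =>
      Function.update_of_ne (by rintro rfl; exact ha hx) _ _
    have himage : (insert a S).image (Function.update μ a b) = insert b (S.image μ) := by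
      rw [Finset.image_insert, Function.update_self, Finset.image_congr heq]
    refine ⟨Function.update μ a b, ?_, ?_, himage ▸ hindb⟩
    · rw [Finset.coe_insert, Set.injOn_insert (by simpa using ha), heq.image_eq]
      refine ⟨hinj.congr heq.symm, ?_⟩
      simpa using hbS
    · intro x hx
      rcases Finset.mem_insert.mp hx with rfl | hxS
      · simpa using hab
      · rw [heq hxS]
        exact hadj x hxS

theorem radoCond_of_indep_matching {μ : A → B} (hinj : Set.InjOn μ S)
    (hadj : ∀ a ∈ S, adj a (μ a)) (hind : M.Indep (S.image μ)) : RadoCond adj M S := by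
  intro T hTS
  have hT : M.Indep (T.image μ) := hind.subset (Finset.image_subset_image hTS)
  calc #T = #(T.image μ) := (Finset.card_image_of_injOn (hinj.mono hTS)).symm
    _ = M.rk (T.image μ) := hT.symm
    _ ≤ M.rk (nbhd adj T) := M.rk_mono (image_subset_nbhd adj fun a ha => hadj a (hTS ha))

theorem exists_indep_matching_iff_radoCond [Fintype A] :
    (∃ μ : A → B, Function.Injective μ ∧ (∀ a, adj a (μ a)) ∧ M.Indep (univ.image μ)) ↔
      RadoCond adj M univ := by
  constructor
  · rintro ⟨μ, hinj, hadj, hind⟩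
    exact radoCond_of_indep_matching hinj.injOn (fun a _ => hadj a) hind
  · intro h
    rcases isEmpty_or_nonempty A with hA | ⟨⟨a⟩⟩
    · exact ⟨isEmptyElim, fun x => isEmptyElim x, isEmptyElim,
        by simp [FinMatroid.Indep, M.rk_empty]⟩
    · have ha : #{a} ≤ #(nbhd adj {a}) := (h {a} (Finset.subset_univ _)).trans (M.rk_le_card _)
      obtain ⟨b, -⟩ := Finset.card_pos.mp (by simpa using ha)
      have : Nonempty B := ⟨b⟩
      obtain ⟨μ, hinj, hadj, hind⟩ := h.exists_indep_matching
      exact ⟨μ, Set.injOn_univ.mp (by simpa using hinj), fun a => hadj a (Finset.mem_univ a), hind⟩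

end Rado

section Application

variable {V E ι : Type*} [Fintype V] [Fintype ι] (ends : E → Sym2 V) (root : ι → V) (k ℓ : ℕ)
  (e : E)

noncomputable def collapseCopies (S : Finset ((E ⊕ ι) ⊕ Fin ℓ)) : Finset (E ⊕ ι) :=
  S.toLeft ∪ S.toRight.image fun _ => Sum.inl e

theorem nbhd_adjHe (S : Finset ((E ⊕ ι) ⊕ Fin ℓ)) :
    nbhd (adjHe ends root k ℓ e) S =
      (univ ×ˢ incVertsStar ends root (collapseCopies ℓ e S)).disjSum
        (loopPart (collapseCopies ℓ e S)) := by
  ext (⟨i, v⟩ | r)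
  · simp [nbhd, collapseCopies, incVertsStar, adjHe, adjH0, incStar, or_and_right, exists_or]
  · simp [nbhd, collapseCopies, loopPart, adjHe, adjH0]

theorem rk_nbhd_adjHe (M : FinMatroid ι) (S : Finset ((E ⊕ ι) ⊕ Fin ℓ)) :
    (M.freeSum (Fin k × V)).rk (nbhd (adjHe ends root k ℓ e) S) =
      k * #(incVertsStar ends root (collapseCopies ℓ e S)) +
        M.rk (loopPart (collapseCopies ℓ e S)) := by
  rw [nbhd_adjHe, FinMatroid.freeSum_rk_disjSum, Finset.card_product, Finset.card_univ,
    Fintype.card_fin]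

theorem counting_iff_radoCond_adjHe [Fintype E] (M : FinMatroid ι)
    (hg0 : ∀ F : Finset (E ⊕ ι),
      #F ≤ k * #(incVertsStar ends root F) + M.rk (loopPart F)) :
    (∀ F : Finset (E ⊕ ι), Sum.inl e ∈ F →
      #F + ℓ ≤ k * #(incVertsStar ends root F) + M.rk (loopPart F)) ↔
      RadoCond (adjHe ends root k ℓ e) (M.freeSum (Fin k × V)) univ := by
  simp only [RadoCond, Finset.subset_univ, forall_const, rk_nbhd_adjHe]
  constructor
  · intro hcount S
    rw [← Finset.card_toLeft_add_card_toRight (u := S)]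
    rcases S.toRight.eq_empty_or_nonempty with hS | hS
    · have hcollapse : collapseCopies ℓ e S = S.toLeft := by simp [collapseCopies, hS]
      simpa [hS, hcollapse] using hg0 S.toLeft
    · have hcollapse : collapseCopies ℓ e S = insert (Sum.inl e) S.toLeft := by
        rw [collapseCopies, Finset.image_const hS, Finset.union_comm, Finset.insert_eq]
      have := Finset.card_le_card (Finset.subset_insert (Sum.inl e) S.toLeft)
      have := Finset.card_le_univ S.toRight
      rw [Fintype.card_fin] at this
      rw [hcollapse]
      exact le_trans (by omega) (hcount _ (Finset.mem_insert_self (Sum.inl e) S.toLeft))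
  · intro hrado F heF
    have hcollapse : collapseCopies ℓ e (F.disjSum univ) = F := by
      ext x
      simp only [collapseCopies, Finset.toLeft_disjSum, Finset.toRight_disjSum,
        Finset.mem_union, Finset.mem_image]
      exact ⟨fun hx => hx.elim id fun ⟨_, _, hx⟩ => hx ▸ heF, Or.inl⟩
    simpa [hcollapse, Finset.card_disjSum] using hrado (F.disjSum univ)

end Application

theorem counting_iff_indep_matching_He_general {V E ι : Type*} [Fintype V] [Fintype E] [Fintype ι]
    (ends : E → Sym2 V) (root : ι → V) (M : FinMatroid ι) (k ℓ : ℕ)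
    (e : E)
    (hg0 : ∀ F : Finset (E ⊕ ι),
      F.card ≤ k * (incVertsStar ends root F).card + M.rk (loopPart F)) :
    (∀ F : Finset (E ⊕ ι), Sum.inl e ∈ F →
      F.card + ℓ ≤ k * (incVertsStar ends root F).card + M.rk (loopPart F)) ↔
    (∃ μ : (E ⊕ ι) ⊕ Fin ℓ → (Fin k × V) ⊕ ι,
      Function.Injective μ ∧
      (∀ x : (E ⊕ ι) ⊕ Fin ℓ, adjHe ends root k ℓ e x (μ x)) ∧
      M.Indep (Finset.univ.filter (fun r : ι => ∃ x, μ x = Sum.inr r))) := by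
  rw [counting_iff_radoCond_adjHe ends root k ℓ e M hg0, ← exists_indep_matching_iff_radoCond]
  refine exists_congr fun μ => and_congr_right' <| and_congr_right' ?_
  rw [FinMatroid.freeSum_indep_iff]
  congr! 1
  ext r
  simp

/-- **Lemma (Rado-type matching criterion for `g_{k,ℓ}`).**
In the setting of `H₀`, let `0 ≤ ℓ ≤ k`, let `e ∈ E`, and let `H_e` be obtained from `H₀`
by adding `ℓ` copies of `e` to `V₀⁺`.  Suppose `|F| ≤ g_{k,0}(F)` for every `F ⊆ E ∪ L`.
Then `|F| ≤ g_{k,ℓ}(F) = k|V(F)| - ℓ + r_M(F ∩ L)` holds for every `F ⊆ E ∪ L` with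
`e ∈ F` if and only if `H_e` has an independent matching covering `V_e⁺`. -/
theorem counting_iff_indep_matching_He {V E ι : Type*} [Fintype V] [Fintype E] [Fintype ι]
    (ends : E → Sym2 V) (root : ι → V) (M : FinMatroid ι) (k ℓ : ℕ)
    (hk : M.rk Finset.univ = k) (hℓ : ℓ ≤ k)
    (hC1 : CondC1 root M.rk) (hC3 : CondC3 V E ι k)
    (e : E)
    (hg0 : ∀ F : Finset (E ⊕ ι),
      F.card ≤ k * (incVertsStar ends root F).card + M.rk (loopPart F)) :
    (∀ F : Finset (E ⊕ ι), Sum.inl e ∈ F →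
      F.card + ℓ ≤ k * (incVertsStar ends root F).card + M.rk (loopPart F)) ↔
    (∃ μ : (E ⊕ ι) ⊕ Fin ℓ → (Fin k × V) ⊕ ι,
      Function.Injective μ ∧
      (∀ x : (E ⊕ ι) ⊕ Fin ℓ, adjHe ends root k ℓ e x (μ x)) ∧
      M.Indep (Finset.univ.filter (fun r : ι => ∃ x, μ x = Sum.inr r))) :=
  counting_iff_indep_matching_He_general ends root M k ℓ e hg0
end
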